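/- Every right-infinite binary word in which every nonempty factor has exponent < 7/3 contains arbitrarily large antisquares: for every N there is an antisquare factor of order ≥ N. -/

import Mathlib

/-!
A `7/3`-power-free binary word contains no cube `aaa`, no `ababa`, and no factor of length 7
with period 3. Hence among any four consecutive adjacent pairs `w e, w (e + 1)` one is a square
`aa`; two squares are never adjacent; and a square at a position `e ≥ 2` is never followed by
one at `e + 3` (that would produce a cube or `abbabba`, up to complement). So after the first
square at a position `e ≥ 2`, squares occur only at positions of the parity of `e`, and from
`e + 1` on the word is the Thue–Morse image `μ v` of a word `v`. A factor of `v` of length `n`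
and period `p` gives a factor of `w` of length `2n` and period `2p`, so `v` is again
`7/3`-power-free; and `μ` doubles the order of antisquares. Starting from the antisquare `01`
or `10`, induction yields antisquares of order `2 ^ n` for every `n`.
-/

/-- Bitwise complement of a binary word. -/
def comp (x : List Bool) : List Bool := x.map (fun b => !b)

/-- An antisquare is a nonempty word of the form `y ++ comp y`. -/
def Antisquare (x : List Bool) : Prop := ∃ y : List Bool, y ≠ [] ∧ x = y ++ comp y

/-- `w` has period `p ≥ 1` if `w[i] = w[i+p]` whenever both indices are valid. -/
def HasPeriod (w : List Bool) (p : ℕ) : Prop :=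
  1 ≤ p ∧ ∀ i, i + p < w.length → w.getD i false = w.getD (i + p) false

/-- The exponent of a finite word: its length divided by its least period. -/
noncomputable def exponent (w : List Bool) : ℝ :=
  (w.length : ℝ) / ((sInf {p : ℕ | HasPeriod w p} : ℕ) : ℝ)

/-- `u` is a factor of the right-infinite word `w : ℕ → Bool`. -/
def FactorInf (u : List Bool) (w : ℕ → Bool) : Prop :=
  ∃ i : ℕ, u = (List.range u.length).map (fun t => w (i + t))

/-- `u` is a factor of the bi-infinite word `w : ℤ → Bool`. -/
def FactorBi (u : List Bool) (w : ℤ → Bool) : Prop :=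
  ∃ i : ℤ, u = (List.range u.length).map (fun t => w (i + (t : ℤ)))

/-- A binary word is good if its only antisquare factors are `01` and `10`. -/
def Good (w : List Bool) : Prop :=
  ∀ u, u <:+: w → Antisquare u → u = [false, true] ∨ u = [true, false]

section Periods

variable {α : Type*}

/-- The factor of length `n` at position `q` of `w` has period `p`. -/
def HasPeriodOn (w : ℕ → α) (q n p : ℕ) : Prop :=
  ∀ t, t + p < n → w (q + t) = w (q + t + p)

def SevenThirdsPowerFree (w : ℕ → α) : Prop :=
  ∀ q n p, 0 < p → 7 * p ≤ 3 * n → ¬ HasPeriodOn w q n p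

def window (w : ℕ → α) (q n : ℕ) : List α :=
  (List.range n).map fun t => w (q + t)

@[simp]
lemma length_window (w : ℕ → α) (q n : ℕ) : (window w q n).length = n := by
  simp [window]

lemma getD_window (w : ℕ → α) (q : ℕ) {n i : ℕ} (hi : i < n) (d : α) :
    (window w q n).getD i d = w (q + i) := by
  simp [window, List.getD_eq_getElem?_getD, hi]

lemma factorInf_window (w : ℕ → Bool) (q n : ℕ) : FactorInf (window w q n) w :=
  ⟨q, by rw [length_window]; rfl⟩

end Periods

lemma hasPeriod_window {w : ℕ → Bool} {q n p : ℕ} (hp : 0 < p) (h : HasPeriodOn w q n p) :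
    HasPeriod (window w q n) p := by
  refine ⟨hp, fun i hi => ?_⟩
  rw [length_window] at hi
  rw [getD_window w q (by omega), getD_window w q hi, ← add_assoc]
  exact h i hi

lemma div_le_exponent_of_hasPeriod {u : List Bool} {p : ℕ} (h : HasPeriod u p) :
    (u.length : ℝ) / p ≤ exponent u := by
  have hmin : sInf {p | HasPeriod u p} ≤ p := Nat.sInf_le h
  have hpos : 0 < sInf {p | HasPeriod u p} := (Nat.sInf_mem (s := {p | HasPeriod u p}) ⟨p, h⟩).1
  unfold exponent
  gcongr

lemma sevenThirdsPowerFree_of_exponent_lt {w : ℕ → Bool}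
    (hexp : ∀ u, FactorInf u w → u ≠ [] → exponent u < 7 / 3) : SevenThirdsPowerFree w := by
  intro q n p hp hpn hper
  have hn : 0 < n := by omega
  have hne : window w q n ≠ [] := List.ne_nil_of_length_pos (by rw [length_window]; exact hn)
  have hle := div_le_exponent_of_hasPeriod (hasPeriod_window hp hper)
  have hlt := hexp _ (factorInf_window w q n) hne
  rw [length_window] at hle
  have hge : (7 : ℝ) / 3 ≤ n / p := by
    rw [div_le_div_iff₀ (by norm_num) (by exact_mod_cast hp)]
    exact_mod_cast (by omega : 7 * p ≤ n * 3)
  linarith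

namespace SevenThirdsPowerFree

variable {w : ℕ → Bool} (hw : SevenThirdsPowerFree w)
include hw

lemma not_cube {q : ℕ} (h0 : w q = w (q + 1)) (h1 : w (q + 1) = w (q + 2)) : False :=
  hw q 3 1 one_pos (by norm_num) fun t ht => by
    obtain rfl | rfl : t = 0 ∨ t = 1 := by omega
    exacts [h0, h1]

lemma exists_eq_succ_within_four (q : ℕ) : ∃ e, q ≤ e ∧ e < q + 4 ∧ w e = w (e + 1) := by
  by_contra! h
  refine hw q 5 2 two_pos (by norm_num) fun t ht => ?_
  have h0 := h (q + t) (by omega) (by omega)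
  have h1 := h (q + t + 1) (by omega) (by omega)
  revert h0 h1
  cases w (q + t) <;> cases w (q + t + 1) <;> cases w (q + t + 1 + 1) <;> simp

/-- Avoiding cubes, `w (q + 1) ⋯ w (q + 6) = ā a a ā a a`, and extending this by `w q` or by
`w (q + 7)` gives a factor of length 7 and period 3. -/
lemma not_eq_succ_gap_three {q : ℕ} (h2 : w (q + 2) = w (q + 3)) (h3 : w (q + 3) ≠ w (q + 4))
    (h4 : w (q + 4) ≠ w (q + 5)) (h5 : w (q + 5) = w (q + 6)) : False := by
  have h1 : w (q + 1) ≠ w (q + 2) := fun h => hw.not_cube h h2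
  have e2 := Bool.eq_not_of_ne h1.symm
  have e4 := Bool.eq_not_of_ne h3.symm
  have e5 := Bool.eq_not_of_ne h4.symm
  by_cases h0 : w q = w (q + 1)
  · have e7 : w (q + 7) = !w (q + 6) := Bool.eq_not_of_ne fun h => hw.not_cube h5 h.symm
    refine hw (q + 1) 7 3 three_pos (by norm_num) fun t ht => ?_
    rcases (by omega : t = 0 ∨ t = 1 ∨ t = 2 ∨ t = 3) with rfl | rfl | rfl | rfl <;>
      simp [e2, ← h2, e4, e5, ← h5, e7]
  · have e1 := Bool.eq_not_of_ne h0
    refine hw q 7 3 three_pos (by norm_num) fun t ht => ?_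
    rcases (by omega : t = 0 ∨ t = 1 ∨ t = 2 ∨ t = 3) with rfl | rfl | rfl | rfl <;>
      simp [e1, e2, ← h2, e4, e5, ← h5]

lemma ne_succ_of_odd_offset {e : ℕ} (he : 2 ≤ e) (h : w e = w (e + 1)) (k : ℕ) :
    w (e + 2 * k + 1) ≠ w (e + 2 * k + 2) := by
  induction k using Nat.twoStepInduction with
  | zero => exact fun h1 => hw.not_cube h h1
  | one =>
    intro h3
    obtain ⟨q, rfl⟩ : ∃ q, e = q + 2 := ⟨e - 2, by omega⟩
    have h2 : w (q + 4) ≠ w (q + 5) := fun h2 => hw.not_cube h2 h3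
    exact hw.not_eq_succ_gap_three h (fun h1 => hw.not_cube h h1) h2 h3
  | more k ih ih' =>
    intro hm
    replace ih' : w (e + 2 * k + 3) ≠ w (e + 2 * k + 4) := by
      simpa [Nat.mul_add, ← add_assoc] using ih'
    replace hm : w (e + 2 * k + 5) = w (e + 2 * k + 6) := by
      simpa [Nat.mul_add, ← add_assoc] using hm
    have hm' : w (e + 2 * k + 4) ≠ w (e + 2 * k + 5) := fun h' => hw.not_cube h' hm
    by_cases hsq : w (e + 2 * k + 2) = w (e + 2 * k + 3)
    · exact hw.not_eq_succ_gap_three hsq ih' hm' hm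
    · obtain ⟨x, hx₁, hx₂, hx⟩ := hw.exists_eq_succ_within_four (e + 2 * k + 1)
      obtain rfl | rfl | rfl | rfl : x = e + 2 * k + 1 ∨ x = e + 2 * k + 2 ∨
        x = e + 2 * k + 3 ∨ x = e + 2 * k + 4 := by omega
      exacts [ih hx, hsq hx, ih' hx, hm' hx]

end SevenThirdsPowerFree

/-- From position `i` on, `w` is the image of `k ↦ w (i + 2 * k)` under the Thue–Morse
morphism `0 ↦ 01`, `1 ↦ 10`. -/
def IsThueMorseImageFrom (w : ℕ → Bool) (i : ℕ) : Prop :=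
  ∀ k, w (i + 2 * k + 1) = !w (i + 2 * k)

lemma SevenThirdsPowerFree.exists_isThueMorseImageFrom {w : ℕ → Bool}
    (hw : SevenThirdsPowerFree w) : ∃ i, IsThueMorseImageFrom w i := by
  obtain ⟨e, he, -, h⟩ := hw.exists_eq_succ_within_four 2
  refine ⟨e + 1, fun k => Bool.eq_not_of_ne fun h' => hw.ne_succ_of_odd_offset he h k ?_⟩
  convert h'.symm using 2 <;> omega

/-- `w` contains the antisquare `y ȳ` with `|y| = m` at position `q`. -/
def HasAntisquareAt (w : ℕ → Bool) (q m : ℕ) : Prop :=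
  ∀ t < m, w (q + m + t) = !w (q + t)

namespace IsThueMorseImageFrom

variable {w : ℕ → Bool} {i : ℕ} (hμ : IsThueMorseImageFrom w i)
include hμ

lemma hasPeriodOn_double {q n p : ℕ} (h : HasPeriodOn (fun k => w (i + 2 * k)) q n p) :
    HasPeriodOn w (i + 2 * q) (2 * n) (2 * p) := by
  intro t ht
  obtain ⟨s, rfl | rfl⟩ := Nat.even_or_odd' t
  · rw [show i + 2 * q + 2 * s + 2 * p = i + 2 * (q + s + p) by ring,
      show i + 2 * q + 2 * s = i + 2 * (q + s) by ring]
    exact h s (by omega)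
  · rw [show i + 2 * q + (2 * s + 1) + 2 * p = i + 2 * (q + s + p) + 1 by ring,
      show i + 2 * q + (2 * s + 1) = i + 2 * (q + s) + 1 by ring, hμ, hμ]
    exact congrArg (!·) (h s (by omega))

lemma sevenThirdsPowerFree (hw : SevenThirdsPowerFree w) :
    SevenThirdsPowerFree fun k => w (i + 2 * k) :=
  fun q n p hp hpn h => hw _ _ _ (by omega) (by omega) (hμ.hasPeriodOn_double h)

lemma hasAntisquareAt_double {q m : ℕ} (h : HasAntisquareAt (fun k => w (i + 2 * k)) q m) :
    HasAntisquareAt w (i + 2 * q) (2 * m) := by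
  intro t ht
  obtain ⟨s, rfl | rfl⟩ := Nat.even_or_odd' t
  · rw [show i + 2 * q + 2 * m + 2 * s = i + 2 * (q + m + s) by ring,
      show i + 2 * q + 2 * s = i + 2 * (q + s) by ring]
    exact h s (by omega)
  · rw [show i + 2 * q + (2 * s + 1) = i + 2 * (q + s) + 1 by ring,
      show i + 2 * q + 2 * m + (2 * s + 1) = i + 2 * (q + m + s) + 1 by ring, hμ, hμ]
    exact congrArg (!·) (h s (by omega))

end IsThueMorseImageFrom

lemma HasAntisquareAt.factorInf {w : ℕ → Bool} {q m : ℕ} (h : HasAntisquareAt w q m) :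
    FactorInf (window w q m ++ comp (window w q m)) w := by
  have hconcat : window w q m ++ comp (window w q m) = window w q (m + m) := by
    simp only [window, comp, List.range_add, List.map_append, List.map_map]
    congr 1
    refine List.map_congr_left fun t ht => ?_
    rw [List.mem_range] at ht
    simp [← h t ht, add_assoc]
  rw [hconcat]
  exact factorInf_window w q _

lemma SevenThirdsPowerFree.exists_hasAntisquareAt_two_pow (n : ℕ) :
    ∀ {w : ℕ → Bool}, SevenThirdsPowerFree w → ∃ q, HasAntisquareAt w q (2 ^ n) := by
  induction n with
  | zero =>
    intro w hw
    obtain ⟨i, hμ⟩ := hw.exists_isThueMorseImageFrom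
    refine ⟨i, fun t ht => ?_⟩
    obtain rfl : t = 0 := by omega
    simpa using hμ 0
  | succ n ih =>
    intro w hw
    obtain ⟨i, hμ⟩ := hw.exists_isThueMorseImageFrom
    obtain ⟨q, hq⟩ := ih (hμ.sevenThirdsPowerFree hw)
    exact ⟨i + 2 * q, by simpa [pow_succ, mul_comm] using hμ.hasAntisquareAt_double hq⟩

/-- every right-infinite binary word avoiding 7/3-powers contains
arbitrarily large antisquares. -/
theorem stmt_7 (w : ℕ → Bool)
    (hexp : ∀ u, FactorInf u w → u ≠ [] → exponent u < 7 / 3) :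
    ∀ N : ℕ, ∃ y : List Bool, y ≠ [] ∧ N ≤ y.length ∧ FactorInf (y ++ comp y) w := by
  intro N
  obtain ⟨q, hq⟩ := (sevenThirdsPowerFree_of_exponent_lt hexp).exists_hasAntisquareAt_two_pow N
  refine ⟨window w q (2 ^ N), ?_, ?_, hq.factorInf⟩
  · exact List.ne_nil_of_length_pos (by rw [length_window]; positivity)
  · rw [length_window]
    exact Nat.lt_two_pow_self.le
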